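/- arXiv:1311.3014 — 4 statements merged into one kernel-verified Lean document; each statement's English description precedes it below -/
import Mathlib

section
/- For every positive integer n, the identity ∑_{i=0}^{n-1} (n+i)!/i! = (2n)! / ((n+1)·(n-1)!) holds; equivalently, n·(2n)! = (n+1)! · ∑_{i=0}^{n-1} (n+i)!/i!. -/
/-!
Each term is `(n + i)! / i ! = n ! * (n + i).choose n`, so the hockey-stick identity turns the sum
into `n ! * (2 * n).choose (n + 1)`, and `(2 * n).choose (n + 1) * (n + 1)! * (n - 1)! = (2 * n)!`.
-/

open Finset Nat

lemma Nat.sum_range_add_choose' (m k : ℕ) :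
    ∑ i ∈ range m, (i + k).choose k = (m + k).choose (k + 1) := by
  cases m with
  | zero => simp
  | succ m => rw [sum_range_add_choose, Nat.add_right_comm]

lemma Nat.factorial_add_div_factorial (n i : ℕ) : (n + i)! / i ! = (i + n).choose n * n ! := by
  rw [add_comm n i, ← add_choose_mul_factorial_mul_factorial i n, Nat.mul_right_comm,
    Nat.mul_div_cancel _ (factorial_pos i)]

lemma Nat.sum_range_factorial_add_div_factorial (n m : ℕ) :
    ∑ i ∈ range m, (n + i)! / i ! = (m + n).choose (n + 1) * n ! := by
  simp_rw [factorial_add_div_factorial, ← sum_mul, sum_range_add_choose']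

lemma Nat.mul_factorial_two_mul (n : ℕ) :
    n * (2 * n)! = (n + 1)! * ((2 * n).choose (n + 1) * n !) := by
  cases n with
  | zero => simp
  | succ n =>
    have h := add_choose_mul_factorial_mul_factorial n (n + 1 + 1)
    rw [show n + (n + 1 + 1) = 2 * (n + 1) by ring] at h
    rw [← h, factorial_succ n]
    ring

lemma Nat.cast_sum_factorial_add_div_factorial {K : Type*} [DivisionSemiring K] [CharZero K]
    (n m : ℕ) : ∑ i ∈ range m, ((n + i)! : K) / i ! = ((∑ i ∈ range m, (n + i)! / i ! : ℕ) : K) := by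
  rw [cast_sum]
  refine sum_congr rfl fun i _ => ?_
  rw [cast_div (factorial_dvd_factorial (Nat.le_add_left i n))
    (cast_ne_zero.2 (factorial_ne_zero i))]

/-- For every positive integer `n`,
`∑_{i=0}^{n-1} (n+i)!/i! = (2n)! / ((n+1)·(n-1)!)`; equivalently,
`n·(2n)! = (n+1)! · ∑_{i=0}^{n-1} (n+i)!/i!`. -/
theorem sum_factorial_ratio_typeB (n : ℕ) (hn : 1 ≤ n) :
    (∑ i ∈ Finset.range n, (Nat.factorial (n + i) : ℚ) / (Nat.factorial i : ℚ))
      = (Nat.factorial (2 * n) : ℚ) / (((n : ℚ) + 1) * (Nat.factorial (n - 1) : ℚ))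
    ∧ n * Nat.factorial (2 * n)
      = Nat.factorial (n + 1) * ∑ i ∈ Finset.range n, Nat.factorial (n + i) / Nat.factorial i := by
  have hnat : n * (2 * n)! = (n + 1)! * ∑ i ∈ range n, (n + i)! / i ! := by
    rw [sum_range_factorial_add_div_factorial, ← two_mul, mul_factorial_two_mul]
  refine ⟨?_, hnat⟩
  rw [cast_sum_factorial_add_div_factorial, eq_div_iff (by positivity)]
  refine mul_left_cancel₀ (by positivity : (n : ℚ) ≠ 0) ?_
  calc (n : ℚ) * ((∑ i ∈ range n, (n + i)! / i ! : ℕ) * ((n + 1) * (n - 1)!))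
      = ((n + 1)! * ∑ i ∈ range n, (n + i)! / i ! : ℕ) := by
        rw [factorial_succ, ← mul_factorial_pred (by omega : n ≠ 0)]
        push_cast
        ring
    _ = n * (2 * n)! := by exact_mod_cast hnat.symm
end

section
/- In the Weyl group W = S_{n+1} of type A_n with longest element w_0 written in the staircase reduced word (rows s_1⋯s_n, s_1⋯s_{n−1}, …, s_1), the number of positions h in this word at which the letter s_i occurs is n − i + 1, and summing the heights of the roots r(h, w_0) over these positions gives (n − i + 1)·i. -/
/-- The simple root `α_{k+1} = e_{k} − e_{k+1}` of type `Aₙ` (0-based index `k`),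
as an integer vector in `ℤ^{n+1}`. -/
def alphaA (n k : ℕ) : Fin (n + 1) → ℤ := fun x =>
  if (x : ℕ) = k then 1 else if (x : ℕ) = k + 1 then -1 else 0

open Fin.NatCast in
/-- The simple reflection `s_{b+1}` of `S_{n+1}` (0-based index `b`). -/
def swA (n b : ℕ) : Equiv.Perm (Fin (n + 1)) :=
  Equiv.swap (b : Fin (n + 1)) ((b + 1 : ℕ) : Fin (n + 1))

/-- The staircase reduced word for the longest element `w₀` of the type `Aₙ` Weyl group
(0-based letters). -/
def staircase (n : ℕ) : List ℕ := (List.range n).flatMap fun m => List.range (n - m)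

open Fin.NatCast in
/-- The height of a vector `v ∈ ℤ^{n+1}` written as `∑ cₖ αₖ` in the simple-root basis of
type `Aₙ`: the sum of the coefficients, `cₖ` being the partial sum of the coordinates. -/
def htA (n : ℕ) (v : Fin (n + 1) → ℤ) : ℤ :=
  ∑ k ∈ Finset.range n, ∑ x ∈ Finset.range (k + 1), v (x : Fin (n + 1))

/-!
Row `r` of the staircase word (rows counted from `0`) is `s_1 ⋯ s_{n-r}`, so `s_i` occurs
exactly once in each of the rows `r < n - i + 1`. As permutations of `{0, …, n}`, `s_1 ⋯ s_b`
is the cycle `(0 1 ⋯ b)`, and the product of the first `r` rows is `x ↦ x + r` on `[0, n - r]`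
and `x ↦ n - x` above. Hence the prefix before the occurrence of `s_i` in row `r` sends
`i - 1 ↦ r` and `i ↦ i + r`, so it maps `α_i = e_{i-1} - e_i` to `e_r - e_{r+i}`, a root of
height `i`.
-/

open Fin.NatCast

def staircaseRows (n a : ℕ) : List ℕ := (List.range a).flatMap fun m => List.range (n - m)

theorem staircaseRows_succ (n a : ℕ) :
    staircaseRows n (a + 1) = staircaseRows n a ++ List.range (n - a) := by
  simp [staircaseRows, List.range_succ]

section LetterSum

variable {M : Type*} [AddCommMonoid M]

/-- For `g u = ht(u(α_b))` this is the sum of the heights of the roots `r(h, w)` over the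
positions `h` of `w` carrying the letter `b`. -/
def letterSum (b : ℕ) (g : List ℕ → M) (w : List ℕ) : M :=
  ∑ h ∈ Finset.range w.length, if w.getD h 0 = b then g (w.take h) else 0

theorem letterSum_append (b : ℕ) (g : List ℕ → M) (w v : List ℕ) :
    letterSum b g (w ++ v) = letterSum b g w + letterSum b (fun u => g (w ++ u)) v := by
  rw [letterSum, List.length_append, Finset.sum_range_add]
  congr 1
  · refine Finset.sum_congr rfl fun h hh => ?_
    have hh : h < w.length := Finset.mem_range.mp hh
    rw [List.getD_append _ _ _ _ hh, List.take_append_of_le_length hh.le]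
  · refine Finset.sum_congr rfl fun h _ => ?_
    rw [List.getD_append_right _ _ _ _ (Nat.le_add_right _ _), Nat.add_sub_cancel_left,
      List.take_length_add_append]

theorem letterSum_range (b : ℕ) (g : List ℕ → M) (m : ℕ) :
    letterSum b g (List.range m) = if b < m then g (List.range b) else 0 := by
  have hget : ∀ h ∈ Finset.range m, (List.range m).getD h 0 = h := fun h hh => by
    rw [List.getD_eq_getElem _ _ (by simpa using hh), List.getElem_range]
  rw [letterSum, List.length_range, Finset.sum_congr rfl fun h hh => by rw [hget h hh],
    Finset.sum_ite_eq']
  simp only [Finset.mem_range, List.take_range]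
  split_ifs with hb
  · rw [min_eq_left hb.le]
  · rfl

theorem letterSum_flatMap_range (b : ℕ) (g : List ℕ → M) (f : ℕ → List ℕ) (a : ℕ) :
    letterSum b g ((List.range a).flatMap f) =
      ∑ r ∈ Finset.range a, letterSum b (fun u => g ((List.range r).flatMap f ++ u)) (f r) := by
  induction a with
  | zero => simp [letterSum]
  | succ a ih =>
    rw [List.range_succ, List.flatMap_append, letterSum_append, ih, Finset.sum_range_succ,
      List.flatMap_singleton]

theorem letterSum_staircase (n b : ℕ) (g : List ℕ → M) (c : M)
    (hg : ∀ r < n - b, g (staircaseRows n r ++ List.range b) = c) :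
    letterSum b g (staircase n) = (n - b) • c := by
  have hrows : (Finset.range n).filter (fun r => b < n - r) = Finset.range (n - b) := by
    ext r
    simp only [Finset.mem_filter, Finset.mem_range]
    omega
  rw [staircase, letterSum_flatMap_range]
  simp only [letterSum_range]
  rw [← Finset.sum_filter, hrows]
  exact (Finset.sum_congr rfl fun r hr => hg r (Finset.mem_range.mp hr)).trans
    (by rw [Finset.sum_const, Finset.card_range])

end LetterSum

theorem val_cycleRange {n : ℕ} (i j : Fin n) :
    (Fin.cycleRange i j : ℕ) =
      if (j : ℕ) < i then (j : ℕ) + 1 else if (j : ℕ) = i then 0 else j := by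
  rcases lt_or_ge i j with h | h
  · rw [Fin.cycleRange_of_gt h, if_neg (by omega), if_neg (by omega)]
  · rw [Fin.coe_cycleRange_of_le h]
    split_ifs <;> first | rfl | omega

theorem prod_map_swA_range (n b : ℕ) (hb : b ≤ n) :
    ((List.range b).map (swA n)).prod = Fin.cycleRange (b : Fin (n + 1)) := by
  induction b with
  | zero => simp
  | succ b ih =>
    rw [List.range_succ, List.map_append, List.prod_append, ih (by omega)]
    ext x
    have hvb : ((b : Fin (n + 1)) : ℕ) = b := Fin.val_cast_of_lt (by omega)
    have hvb1 : (((b + 1 : ℕ) : Fin (n + 1)) : ℕ) = b + 1 := Fin.val_cast_of_lt (by omega)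
    simp only [List.map_cons, List.map_nil, List.prod_singleton, Equiv.Perm.mul_apply, swA,
      Equiv.swap_apply_def, val_cycleRange, hvb, hvb1]
    split_ifs <;> simp only [Fin.ext_iff, hvb, hvb1] at * <;> omega

theorem val_prod_map_swA_staircaseRows (n a : ℕ) (ha : a ≤ n) (x : Fin (n + 1)) :
    ((((staircaseRows n a).map (swA n)).prod x : Fin (n + 1)) : ℕ) =
      if (x : ℕ) ≤ n - a then (x : ℕ) + a else n - x := by
  induction a generalizing x with
  | zero =>
    have hx := x.isLt
    simp only [staircaseRows, List.range_zero, List.flatMap_nil, List.map_nil, List.prod_nil,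
      Equiv.Perm.one_apply]
    split_ifs <;> omega
  | succ a ih =>
    have hx := x.isLt
    rw [staircaseRows_succ, List.map_append, List.prod_append, Equiv.Perm.mul_apply,
      ih (by omega), prod_map_swA_range n (n - a) (by omega), val_cycleRange,
      Fin.val_cast_of_lt (by omega : n - a < n + 1)]
    split_ifs <;> omega

theorem htA_sub (n : ℕ) (v w : Fin (n + 1) → ℤ) : htA n (v - w) = htA n v - htA n w := by
  simp only [htA, Pi.sub_apply, Finset.sum_sub_distrib]

theorem htA_single (n : ℕ) (p : Fin (n + 1)) : htA n (Pi.single p 1) = n - (p : ℕ) := by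
  have hinner : ∀ k ∈ Finset.range n,
      ∑ x ∈ Finset.range (k + 1), (Pi.single p 1 : Fin (n + 1) → ℤ) (x : Fin (n + 1)) =
        if (p : ℕ) ≤ k then 1 else 0 := fun k hk => by
    have hk := Finset.mem_range.mp hk
    calc ∑ x ∈ Finset.range (k + 1), (Pi.single p 1 : Fin (n + 1) → ℤ) (x : Fin (n + 1))
        = ∑ x ∈ Finset.range (k + 1), if x = (p : ℕ) then 1 else 0 :=
          Finset.sum_congr rfl fun x hx => by
            simp only [Pi.single_apply, Fin.ext_iff,
              Fin.val_cast_of_lt (by rw [Finset.mem_range] at hx; omega : x < n + 1)]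
      _ = if (p : ℕ) ≤ k then 1 else 0 := by
          simp only [Finset.sum_ite_eq', Finset.mem_range, Nat.lt_succ_iff]
  have hfilter : (Finset.range n).filter (fun k => (p : ℕ) ≤ k) = Finset.Ico (p : ℕ) n := by
    ext k
    simp only [Finset.mem_filter, Finset.mem_range, Finset.mem_Ico]
    omega
  rw [htA, Finset.sum_congr rfl hinner, Finset.sum_boole, hfilter, Nat.card_Ico,
    Nat.cast_sub (by omega)]

theorem alphaA_comp_inv_eq_single_sub_single (n b : ℕ) (hb : b < n)
    (P : Equiv.Perm (Fin (n + 1))) :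
    (fun x => alphaA n b (P⁻¹ x)) = Pi.single (P b) 1 - Pi.single (P (b + 1 : ℕ)) 1 := by
  have hvb : ((b : Fin (n + 1)) : ℕ) = b := Fin.val_cast_of_lt (by omega)
  have hvb1 : (((b + 1 : ℕ) : Fin (n + 1)) : ℕ) = b + 1 := Fin.val_cast_of_lt (by omega)
  funext x
  obtain ⟨y, rfl⟩ := P.surjective x
  simp only [Equiv.Perm.coe_inv, Equiv.symm_apply_apply, Pi.sub_apply, Pi.single_apply,
    P.injective.eq_iff, alphaA, Fin.ext_iff, hvb, hvb1]
  split_ifs <;> omega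

theorem htA_alphaA_comp_inv (n b : ℕ) (hb : b < n) (P : Equiv.Perm (Fin (n + 1))) :
    htA n (fun x => alphaA n b (P⁻¹ x)) = (P (b + 1 : ℕ) : ℕ) - (P b : ℕ) := by
  rw [alphaA_comp_inv_eq_single_sub_single n b hb, htA_sub, htA_single, htA_single]
  ring

theorem htA_alphaA_prod_staircaseRows_append_range (n b r : ℕ) (hbr : b < n - r) :
    htA n (fun x => alphaA n b
      ((((staircaseRows n r ++ List.range b).map (swA n)).prod)⁻¹ x)) = b + 1 := by
  have hvb : ((b : Fin (n + 1)) : ℕ) = b := Fin.val_cast_of_lt (by omega)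
  have hvb1 : (((b + 1 : ℕ) : Fin (n + 1)) : ℕ) = b + 1 := Fin.val_cast_of_lt (by omega)
  rw [htA_alphaA_comp_inv n b (by omega), List.map_append, List.prod_append,
    Equiv.Perm.mul_apply, Equiv.Perm.mul_apply, prod_map_swA_range n b (by omega),
    val_prod_map_swA_staircaseRows n r (by omega), val_prod_map_swA_staircaseRows n r (by omega),
    val_cycleRange, val_cycleRange, hvb, hvb1]
  simp only [lt_irrefl, if_false, if_true]
  split_ifs <;> push_cast <;> omega

/-- In `W = S_{n+1}` of type `Aₙ` with the staircase reduced word for `w₀`, the number of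
positions `h` carrying the letter `sᵢ` is `n − i + 1`, and the sum of the heights of the
roots `r(h, w₀)` over these positions is `(n − i + 1)·i`.  (`i` is 1-based.) -/
theorem typeA_staircase_letter_count_and_height_sum (n i : ℕ) (hi : 1 ≤ i) (hin : i ≤ n) :
    ((Finset.range (staircase n).length).filter
        fun h => (staircase n).getD h 0 = i - 1).card = n - i + 1
    ∧ (∑ h ∈ (Finset.range (staircase n).length).filter
          (fun h => (staircase n).getD h 0 = i - 1),
        htA n (fun x => alphaA n (i - 1)
          (((((staircase n).take h).map (swA n)).prod)⁻¹ x)))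
      = ((n : ℤ) - i + 1) * i := by
  constructor
  · rw [Finset.card_filter]
    refine (letterSum_staircase n (i - 1) (fun _ => 1) 1 fun _ _ => rfl).trans ?_
    rw [smul_eq_mul, mul_one]
    omega
  · rw [Finset.sum_filter]
    refine (letterSum_staircase n (i - 1)
      (fun u => htA n fun x => alphaA n (i - 1) (((u.map (swA n)).prod)⁻¹ x)) ((i - 1 : ℕ) + 1)
      fun r hr => htA_alphaA_prod_staircaseRows_append_range n (i - 1) r (by omega)).trans ?_
    rw [nsmul_eq_mul, Nat.cast_sub (by omega), Nat.cast_sub hi]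
    push_cast
    ring
end

section
/- Let W be a Coxeter group, let J and K be disjoint subsets of the simple reflections such that every element of J commutes with every element of K. Fix a reduced word w̃ for an element w ∈ W, and fix v_J ∈ W_J and v_K ∈ W_K. Then a subword b of w̃ is a reduced word for v_J · v_K of length ℓ(v_J) + ℓ(v_K) if and only if b = b_J ∪ b_K (union of index sets) for subwords b_J and b_K of w̃ that are reduced words for v_J and v_K respectively. -/
/-!
A reduced word for an element of a standard parabolic subgroup `W_J` only uses letters from
`J`. This is where Coxeter theory enters: the exchange condition, proved with Tits' sign
representation on `W × ZMod 2`, shows that a right descent `s_i` of an element of `W_J` lies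
in `W_J`, and the geometric representation shows that `s_i ∈ W_J` forces `i ∈ J`, since `W_J`
fixes the `i`-th coordinate for `i ∉ J` while `s_i` negates `e_i`.

Hence a reduced subword for `v_J v_K` splits into its `J`-letters and its `K`-letters. These
commute, so the two parts multiply to some `x ∈ W_J` and `y ∈ W_K` with `x y = v_J v_K`, and
`W_J ∩ W_K = 1` forces `x = v_J`, `y = v_K`; counting letters shows both parts are reduced.
Conversely, reduced subwords for `v_J` and `v_K` occupy disjoint positions, their letters
commute, and `ℓ(v_J v_K) = ℓ(v_J) + ℓ(v_K)` makes their union reduced.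
-/

def subwordAt {B : Type*} (ω : List B) (S : Finset (Fin ω.length)) : List B :=
  (S.sort (· ≤ ·)).map ω.get

theorem List.prod_map_eq_prod_map_filter_mul_prod_map_filter_not {α G : Type*} [Monoid G]
    (f : α → G) (p : α → Prop) [DecidablePred p] (l : List α)
    (hcomm : ∀ a ∈ l, ∀ b ∈ l, p a → ¬p b → Commute (f a) (f b)) :
    (l.map f).prod = ((l.filter p).map f).prod * ((l.filter (¬p ·)).map f).prod := by
  induction l with
  | nil => simp
  | cons a l ih =>
    have ih' := ih fun x hx y hy => hcomm x (.tail a hx) y (.tail a hy)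
    by_cases ha : p a
    · simp [ha, ih', mul_assoc]
    · have hcomm_a : Commute (f a) ((l.filter p).map f).prod := by
        refine Commute.list_prod_right _ _ fun x hx => ?_
        obtain ⟨b, hb, rfl⟩ := List.mem_map.mp hx
        rw [List.mem_filter, decide_eq_true_iff] at hb
        exact (hcomm b (.tail a hb.1) a (.head l) hb.2 ha).symm
      simp [ha, ih', ← mul_assoc, hcomm_a.eq]

theorem Finset.sort_filter {α : Type*} [LinearOrder α] (S : Finset α) (p : α → Prop)
    [DecidablePred p] : (S.filter p).sort (· ≤ ·) = (S.sort (· ≤ ·)).filter p := by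
  refine List.Perm.eq_of_pairwise' (pairwise_sort _ _) ((pairwise_sort _ _).filter _) ?_
  refine List.perm_of_nodup_nodup_toFinset_eq (sort_nodup _ _) ((sort_nodup _ _).filter _) ?_
  ext
  simp

theorem length_subwordAt {B : Type*} (ω : List B) (S : Finset (Fin ω.length)) :
    (subwordAt ω S).length = S.card := by
  simp [subwordAt]

theorem mem_subwordAt {B : Type*} {ω : List B} {S : Finset (Fin ω.length)} {a : B} :
    a ∈ subwordAt ω S ↔ ∃ k ∈ S, ω.get k = a := by
  simp [subwordAt]

open Real

/-- `A` acts on the span of `e` and `f` as a rotation by `2θ`; scaling by `sin θ` keeps the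
formulas for its powers free of division. -/
theorem Module.End.sin_smul_pow_apply {V : Type*} [AddCommGroup V] [Module ℝ V]
    (A : Module.End ℝ V) (θ : ℝ) {e f : V}
    (he : A e = (4 * cos θ ^ 2 - 1) • e + (2 * cos θ) • f)
    (hf : A f = -((2 * cos θ) • e + f)) (n : ℕ) :
    sin θ • (A ^ n) e = sin ((2 * n + 1) * θ) • e + sin (2 * n * θ) • f ∧
      sin θ • (A ^ n) f = -(sin (2 * n * θ) • e + sin ((2 * n - 1) * θ) • f) := by
  have hrec (y : ℝ) : sin (y + θ) = 2 * cos θ * sin y - sin (y - θ) := by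
    rw [sin_add, sin_sub]; ring
  induction n with
  | zero => simp
  | succ n ih =>
    set x := 2 * n * θ
    have h1 : (2 * ((n + 1 : ℕ) : ℝ) + 1) * θ = x + θ + θ + θ := by push_cast; ring
    have h2 : 2 * ((n + 1 : ℕ) : ℝ) * θ = x + θ + θ := by push_cast; ring
    have h3 : (2 * ((n + 1 : ℕ) : ℝ) - 1) * θ = x + θ := by push_cast; ring
    have h4 : (2 * (n : ℝ) + 1) * θ = x + θ := by ring
    have h5 : (2 * (n : ℝ) - 1) * θ = x - θ := by ring
    rw [h4, h5] at ih
    rw [h1, h2, h3, pow_succ', Module.End.mul_apply, Module.End.mul_apply,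
      ← map_smul A (sin θ) ((A ^ n) e), ← map_smul A (sin θ) ((A ^ n) f), ih.1, ih.2]
    simp only [map_add, map_neg, map_smul, he, hf]
    rw [hrec (x + θ + θ), add_sub_cancel_right, hrec (x + θ), add_sub_cancel_right, hrec x]
    constructor <;> module

namespace CoxeterMatrix

variable {B : Type*} (M : CoxeterMatrix B)

/-- An entry `M b c = 0` stands for `∞`; then `π / 0 = 0` gives the correct value `-1`. -/
noncomputable def geomCoeff (b c : B) : ℝ := -cos (π / M b c)

noncomputable def geomFunctional (b : B) : (B →₀ ℝ) →ₗ[ℝ] ℝ :=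
  Finsupp.linearCombination ℝ (M.geomCoeff b)

noncomputable def geomReflection (b : B) : Module.End ℝ (B →₀ ℝ) :=
  LinearMap.id - (2 : ℝ) • (M.geomFunctional b).smulRight (Finsupp.single b 1)

theorem geomCoeff_self (b : B) : M.geomCoeff b b = 1 := by
  simp [geomCoeff]

theorem geomCoeff_comm (b c : B) : M.geomCoeff b c = M.geomCoeff c b := by
  simp [geomCoeff, M.symmetric b c]

theorem geomFunctional_single (b c : B) :
    M.geomFunctional b (Finsupp.single c 1) = M.geomCoeff b c := by
  simp [geomFunctional]

theorem geomReflection_apply (b : B) (v : B →₀ ℝ) :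
    M.geomReflection b v = v - (2 * M.geomFunctional b v) • Finsupp.single b 1 := by
  simp [geomReflection, mul_smul]

theorem geomReflection_mul_self (b : B) : M.geomReflection b * M.geomReflection b = 1 := by
  refine LinearMap.ext fun v => ?_
  simp only [Module.End.mul_apply, Module.End.one_apply, geomReflection_apply M b v]
  rw [geomReflection_apply, map_sub, map_smul, geomFunctional_single, geomCoeff_self]
  module

theorem geomReflection_apply_of_geomFunctional_eq_zero {b : B} {v : B →₀ ℝ}
    (hv : M.geomFunctional b v = 0) : M.geomReflection b v = v := by
  simp [geomReflection_apply, hv]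

theorem exists_geomFunctional_sub_eq_zero {b c : B} (hbc : M.geomCoeff b c ^ 2 ≠ 1)
    (v : B →₀ ℝ) : ∃ x y : ℝ,
      M.geomFunctional b (v - (x • Finsupp.single b 1 + y • Finsupp.single c 1)) = 0 ∧
      M.geomFunctional c (v - (x • Finsupp.single b 1 + y • Finsupp.single c 1)) = 0 := by
  set k := M.geomCoeff b c
  have hk : 1 - k ^ 2 ≠ 0 := sub_ne_zero.mpr hbc.symm
  refine ⟨(M.geomFunctional b v - k * M.geomFunctional c v) / (1 - k ^ 2),
    (M.geomFunctional c v - k * M.geomFunctional b v) / (1 - k ^ 2), ?_, ?_⟩ <;>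
  · simp only [map_sub, map_add, map_smul, geomFunctional_single, geomCoeff_self, smul_eq_mul,
      geomCoeff_comm M c b]
    field_simp
    ring

theorem geomReflection_mul_pow_eq_one {b c : B} (hbc : 2 ≤ M b c) :
    (M.geomReflection b * M.geomReflection c) ^ M b c = 1 := by
  set m := M b c
  set θ := π / m
  set A := M.geomReflection b * M.geomReflection c
  set e : B →₀ ℝ := Finsupp.single b 1
  set f : B →₀ ℝ := Finsupp.single c 1
  have hm : (2 : ℝ) ≤ m := by exact_mod_cast hbc
  have hmθ : 2 * m * θ = 2 * π := by
    simp only [θ]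
    field_simp
  have hθ : 0 < θ ∧ θ < π := ⟨by positivity, div_lt_self pi_pos (by linarith)⟩
  have hsin : sin θ ≠ 0 := (sin_pos_of_pos_of_lt_pi hθ.1 hθ.2).ne'
  have hk : M.geomCoeff b c = -cos θ := rfl
  have hk' : M.geomCoeff c b = -cos θ := by rw [geomCoeff_comm, hk]
  have he : A e = (4 * cos θ ^ 2 - 1) • e + (2 * cos θ) • f := by
    simp only [A, e, f, Module.End.mul_apply, geomReflection_apply, map_sub, map_smul,
      geomFunctional_single, geomCoeff_self, hk, hk']
    module
  have hf : A f = -((2 * cos θ) • e + f) := by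
    simp only [A, e, f, Module.End.mul_apply, geomReflection_apply, map_sub, map_smul,
      geomFunctional_single, geomCoeff_self, hk]
    module
  obtain ⟨hpe, hpf⟩ := A.sin_smul_pow_apply θ he hf m
  have hAe : (A ^ m) e = e := smul_right_injective _ hsin <| show sin θ • _ = sin θ • _ by
    rw [hpe, show (2 * m + 1) * θ = θ + 2 * π by linarith, sin_add_two_pi, hmθ, sin_two_pi]
    simp
  have hAf : (A ^ m) f = f := smul_right_injective _ hsin <| show sin θ • _ = sin θ • _ by
    rw [hpf, show (2 * m - 1) * θ = -θ + 2 * π by linarith, sin_add_two_pi, sin_neg, hmθ,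
      sin_two_pi]
    simp
  have hcos : M.geomCoeff b c ^ 2 ≠ 1 := by
    rw [hk, neg_sq]
    intro h
    exact hsin (pow_eq_zero_iff two_ne_zero |>.mp (by linarith [sin_sq_add_cos_sq θ]))
  refine LinearMap.ext fun v => ?_
  obtain ⟨x, y, hxb, hxc⟩ := M.exists_geomFunctional_sub_eq_zero hcos v
  set q := v - (x • e + y • f)
  have hAq : A q = q := by
    rw [Module.End.mul_apply, geomReflection_apply_of_geomFunctional_eq_zero M hxc,
      geomReflection_apply_of_geomFunctional_eq_zero M hxb]
  calc (A ^ m) v = (A ^ m) (q + (x • e + y • f)) := by rw [sub_add_cancel]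
    _ = q + (x • e + y • f) := by
      rw [map_add, Module.End.pow_apply, Function.iterate_fixed hAq,
        map_add, map_smul, map_smul, hAe, hAf]
    _ = v := sub_add_cancel v _

theorem isLiftable_geomReflection : M.IsLiftable M.geomReflection := by
  intro b c
  rcases eq_or_ne b c with rfl | hbc
  · rw [M.diagonal, pow_one, geomReflection_mul_self]
  · rcases Nat.eq_zero_or_pos (M b c) with h | h
    · rw [h, pow_zero]
    · exact M.geomReflection_mul_pow_eq_one (by have := M.off_diagonal b c hbc; omega)

end CoxeterMatrix

namespace CoxeterSystem

variable {B W : Type*} [Group W] {M : CoxeterMatrix B} (cs : CoxeterSystem M W)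

theorem prod_map_alternatingWord_two_mul {G : Type*} [Monoid G] (f : B → G) (i j : B) (p : ℕ) :
    ((alternatingWord i j (2 * p)).map f).prod = (f i * f j) ^ p := by
  induction p with
  | zero => simp [alternatingWord]
  | succ p ih =>
    rw [show 2 * (p + 1) = 2 * p + 1 + 1 by ring, alternatingWord_succ', alternatingWord_succ']
    simp [ih, pow_succ', mul_assoc]

theorem reverse_alternatingWord_two_mul (i j : B) (p : ℕ) :
    (alternatingWord i j (2 * p)).reverse = alternatingWord j i (2 * p) := by
  induction p with
  | zero => simp [alternatingWord]
  | succ p ih =>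
    rw [show 2 * (p + 1) = 2 * p + 1 + 1 by ring, alternatingWord_succ', alternatingWord_succ',
      alternatingWord_succ, alternatingWord_succ]
    simp [ih]

theorem simple_mul_mul_simple_eq_simple_iff (i : B) (t : W) :
    cs.simple i * t * cs.simple i = cs.simple i ↔ t = cs.simple i := by
  constructor
  · intro h
    simpa [mul_assoc] using congrArg (fun x => cs.simple i * x * cs.simple i) h
  · rintro rfl
    simp

section SignRepresentation

variable [DecidableEq W]

def sgnPerm (i : B) : Equiv.Perm (W × ZMod 2) :=
  Function.Involutive.toPerm
    (fun x => (cs.simple i * x.1 * cs.simple i, x.2 + if x.1 = cs.simple i then 1 else 0))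
    (by
      rintro ⟨t, ε⟩
      ext
      · simp [mul_assoc]
      · simp only [simple_mul_mul_simple_eq_simple_iff]
        split_ifs <;> simp [add_assoc, CharTwo.add_self_eq_zero])

@[simp]
theorem sgnPerm_apply (i : B) (t : W) (ε : ZMod 2) :
    cs.sgnPerm i (t, ε) = (cs.simple i * t * cs.simple i, ε + if t = cs.simple i then 1 else 0) :=
  rfl

theorem prod_map_sgnPerm_apply (ω : List B) (t : W) (ε : ZMod 2) :
    (ω.map cs.sgnPerm).prod (t, ε) =
      (cs.wordProd ω * t * (cs.wordProd ω)⁻¹, ε + (cs.rightInvSeq ω).count t) := by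
  induction ω with
  | nil => simp [rightInvSeq]
  | cons i ω ih =>
    have hconj : cs.wordProd ω * t * (cs.wordProd ω)⁻¹ = cs.simple i ↔
        (cs.wordProd ω)⁻¹ * cs.simple i * cs.wordProd ω = t := by
      constructor <;> intro h <;> rw [← h] <;> group
    simp only [List.map_cons, List.prod_cons, Equiv.Perm.mul_apply, ih, rightInvSeq,
      List.count_cons, wordProd_cons, beq_iff_eq]
    ext
    · simp [mul_assoc]
    · simp only [sgnPerm_apply, hconj]
      push_cast
      ring

theorem even_count_rightInvSeq_alternatingWord (i j : B) (t : W) :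
    Even ((cs.rightInvSeq (alternatingWord i j (2 * M i j))).count t) := by
  set m := M i j
  -- the left inversion sequence of the braid word is periodic with period `M i j`
  set f : ℕ → W := fun k => cs.simple j * (cs.simple i * cs.simple j) ^ k
  have hlis : cs.leftInvSeq (alternatingWord j i (2 * m)) = (List.range (m + m)).map f := by
    refine List.ext_getElem (by simp [two_mul]) fun k hk _ => ?_
    rw [getElem_leftInvSeq_alternatingWord cs j i m k (by simpa using hk),
      prod_alternatingWord_eq_mul_pow]
    simp [f, Nat.add_div]
  have hf : ∀ k, f (m + k) = f k := by
    intro k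
    simp [f, pow_add, m, simple_mul_simple_pow]
  rw [← reverse_alternatingWord_two_mul, rightInvSeq_reverse, List.count_reverse, hlis,
    List.range_add, List.map_append, List.map_map, List.count_append]
  simp [Function.comp_def, hf]

theorem isLiftable_sgnPerm : M.IsLiftable cs.sgnPerm := by
  intro i j
  ext ⟨t, ε⟩ : 1
  obtain ⟨r, hr⟩ := cs.even_count_rightInvSeq_alternatingWord i j t
  have hprod : cs.wordProd (alternatingWord i j (2 * M i j)) = 1 := by
    rw [wordProd, prod_map_alternatingWord_two_mul, simple_mul_simple_pow]
  rw [← prod_map_alternatingWord_two_mul, prod_map_sgnPerm_apply, hprod, hr]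
  simp [CharTwo.add_self_eq_zero]

theorem count_rightInvSeq_eq_of_wordProd_eq {ω ω' : List B} (h : cs.wordProd ω = cs.wordProd ω')
    (t : W) : ((cs.rightInvSeq ω).count t : ZMod 2) = (cs.rightInvSeq ω').count t := by
  set ρ := cs.lift ⟨cs.sgnPerm, cs.isLiftable_sgnPerm⟩
  have hρ (ω : List B) : ρ (cs.wordProd ω) = (ω.map cs.sgnPerm).prod := by
    rw [wordProd, map_list_prod, List.map_map]
    exact congrArg List.prod (List.map_congr_left fun i _ => cs.lift_apply_simple _ i)
  simpa [hρ, prod_map_sgnPerm_apply] using congrArg (fun w => (ρ w (t, 0)).2) h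

end SignRepresentation

theorem simple_mem_rightInvSeq_of_length_mul_simple_lt {ω : List B} {i : B}
    (h : cs.length (cs.wordProd ω * cs.simple i) < cs.length (cs.wordProd ω)) :
    cs.simple i ∈ cs.rightInvSeq ω := by
  classical
  -- `ω` and `ω' ++ [i]` spell the same element, so `s_i` occurs in their right inversion
  -- sequences equally often mod 2; in the latter it occurs exactly once.
  obtain ⟨ω', hω', hω'prod⟩ := cs.exists_isReduced (cs.wordProd ω * cs.simple i)
  have hprod : cs.wordProd (ω'.concat i) = cs.wordProd ω := by
    rw [wordProd_concat, ← hω'prod, mul_assoc, simple_mul_simple_self, mul_one]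
  have hnotmem : cs.simple i ∉ cs.rightInvSeq ω' := fun hmem => by
    have hinv := (cs.isRightInversion_of_mem_rightInvSeq hω' hmem).2
    rw [← hω'prod, mul_assoc, simple_mul_simple_self, mul_one] at hinv
    omega
  have hcount := cs.count_rightInvSeq_eq_of_wordProd_eq hprod (cs.simple i)
  have hmap := List.count_map_of_injective (cs.rightInvSeq ω') _
    (MulAut.conj (cs.simple i)).injective (cs.simple i)
  rw [MulAut.conj_apply, mul_inv_cancel_right, List.count_eq_zero_of_not_mem hnotmem] at hmap
  rw [rightInvSeq_concat, List.concat_eq_append, List.count_append, hmap] at hcount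
  rw [← List.count_pos_iff, Nat.pos_iff_ne_zero]
  intro hzero
  simp [hzero] at hcount

theorem exists_wordProd_mul_simple_eq_wordProd_eraseIdx {ω : List B} {i : B}
    (h : cs.length (cs.wordProd ω * cs.simple i) < cs.length (cs.wordProd ω)) :
    ∃ k < ω.length, cs.wordProd ω * cs.simple i = cs.wordProd (ω.eraseIdx k) := by
  obtain ⟨k, hk, hkeq⟩ :=
    List.mem_iff_getElem.mp (cs.simple_mem_rightInvSeq_of_length_mul_simple_lt h)
  refine ⟨k, by simpa using hk, ?_⟩
  rw [← wordProd_mul_getD_rightInvSeq, List.getD_eq_getElem _ _ hk, hkeq]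

section Parabolic

variable {J : Set B}

theorem wordProd_mem_closure {ω : List B} (hω : ∀ a ∈ ω, a ∈ J) :
    cs.wordProd ω ∈ Subgroup.closure (cs.simple '' J) :=
  Subgroup.list_prod_mem _ fun _ hx => by
    obtain ⟨a, ha, rfl⟩ := List.mem_map.mp hx
    exact Subgroup.subset_closure ⟨a, hω a ha, rfl⟩

theorem exists_wordProd_eq_of_mem_closure {w : W}
    (hw : w ∈ Subgroup.closure (cs.simple '' J)) :
    ∃ ω : List B, (∀ a ∈ ω, a ∈ J) ∧ cs.wordProd ω = w := by
  have happend (ω : List B) (hω : ∀ a ∈ ω, a ∈ J) (j : B) (hj : j ∈ J) :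
      ∃ ω', (∀ a ∈ ω', a ∈ J) ∧ cs.wordProd ω' = cs.wordProd ω * cs.simple j :=
    ⟨ω ++ [j], by simpa [or_imp, forall_and] using And.intro hω hj,
      by rw [wordProd_append, wordProd_singleton]⟩
  induction hw using Subgroup.closure_induction_right with
  | one => exact ⟨[], by simp, rfl⟩
  | mul_right _ _ _ hy ih =>
    obtain ⟨j, hj, rfl⟩ := hy
    obtain ⟨ω, hω, rfl⟩ := ih
    exact happend ω hω j hj
  | mul_inv_cancel _ _ _ hy ih =>
    obtain ⟨j, hj, rfl⟩ := hy
    obtain ⟨ω, hω, rfl⟩ := ih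
    rw [inv_simple]
    exact happend ω hω j hj

theorem simple_mem_closure_iff {i : B} :
    cs.simple i ∈ Subgroup.closure (cs.simple '' J) ↔ i ∈ J := by
  refine ⟨fun hi => ?_, fun hi => Subgroup.subset_closure ⟨i, hi, rfl⟩⟩
  by_contra hiJ
  set ρ := cs.lift ⟨M.geomReflection, M.isLiftable_geomReflection⟩
  have hρ (w : W) (j : B) (hj : j ∈ J) (hw : ∀ v, ρ w v i = v i) (v : B →₀ ℝ) :
      ρ (w * cs.simple j) v i = v i := by
    rw [map_mul, Module.End.mul_apply, hw, lift_apply_simple, M.geomReflection_apply]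
    simp [ne_of_mem_of_not_mem hj hiJ]
  have hfix : ∀ w ∈ Subgroup.closure (cs.simple '' J), ∀ v, ρ w v i = v i := by
    intro w hw
    induction hw using Subgroup.closure_induction_right with
    | one => simp
    | mul_right _ _ _ hy ih =>
      obtain ⟨j, hj, rfl⟩ := hy
      exact hρ _ j hj ih
    | mul_inv_cancel _ _ _ hy ih =>
      obtain ⟨j, hj, rfl⟩ := hy
      rw [inv_simple]
      exact hρ _ j hj ih
  have := hfix _ hi (Finsupp.single i 1)
  rw [lift_apply_simple, M.geomReflection_apply, M.geomFunctional_single, M.geomCoeff_self] at this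
  norm_num at this

theorem mem_of_length_mul_simple_lt {w : W} (hw : w ∈ Subgroup.closure (cs.simple '' J))
    {i : B} (h : cs.length (w * cs.simple i) < cs.length w) : i ∈ J := by
  obtain ⟨ω, hω, rfl⟩ := cs.exists_wordProd_eq_of_mem_closure hw
  obtain ⟨k, -, hk⟩ := cs.exists_wordProd_mul_simple_eq_wordProd_eraseIdx h
  refine cs.simple_mem_closure_iff.mp ?_
  rw [← inv_mul_cancel_left (cs.wordProd ω) (cs.simple i), hk]
  exact mul_mem (inv_mem hw)
    (cs.wordProd_mem_closure fun a ha => hω a ((List.eraseIdx_sublist ω k).subset ha))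

theorem mem_of_mem_of_isReduced {ω : List B} (hω : cs.IsReduced ω)
    (hw : cs.wordProd ω ∈ Subgroup.closure (cs.simple '' J)) : ∀ a ∈ ω, a ∈ J := by
  induction ω using List.reverseRecOn with
  | nil => simp
  | append_singleton ω i ih =>
    have hprod : cs.wordProd (ω ++ [i]) * cs.simple i = cs.wordProd ω := by
      rw [wordProd_append, wordProd_singleton, simple_mul_simple_cancel_right]
    have hi : i ∈ J := by
      refine cs.mem_of_length_mul_simple_lt hw ?_
      rw [hprod, hω, List.length_append]
      have := cs.length_wordProd_le ω
      simp only [List.length_singleton]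
      omega
    have hω' : cs.IsReduced ω := by simpa using hω.take ω.length
    have := ih hω' (hprod ▸ mul_mem hw (Subgroup.subset_closure ⟨i, hi, rfl⟩))
    simpa [or_imp, forall_and, hi] using this

theorem disjoint_closure_simple_image {K : Set B} (hJK : Disjoint J K) :
    Disjoint (Subgroup.closure (cs.simple '' J)) (Subgroup.closure (cs.simple '' K)) := by
  refine Subgroup.disjoint_def.mpr fun {w} hwJ hwK => ?_
  obtain ⟨ω, hω, rfl⟩ := cs.exists_isReduced w
  cases ω with
  | nil => rfl
  | cons a ω =>
    have haJ := cs.mem_of_mem_of_isReduced hω hwJ a List.mem_cons_self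
    have haK := cs.mem_of_mem_of_isReduced hω hwK a List.mem_cons_self
    exact absurd haK (hJK.notMem_of_mem_left haJ)

theorem eq_and_eq_of_mul_eq_mul {K : Set B} (hJK : Disjoint J K) {x x' y y' : W}
    (hx : x ∈ Subgroup.closure (cs.simple '' J)) (hx' : x' ∈ Subgroup.closure (cs.simple '' J))
    (hy : y ∈ Subgroup.closure (cs.simple '' K)) (hy' : y' ∈ Subgroup.closure (cs.simple '' K))
    (h : x * y = x' * y') : x = x' ∧ y = y' := by
  simpa [Prod.ext_iff] using Subgroup.mul_injective_of_disjoint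
    (cs.disjoint_closure_simple_image hJK) (a₁ := (⟨x, hx⟩, ⟨y, hy⟩))
    (a₂ := (⟨x', hx'⟩, ⟨y', hy'⟩)) h

theorem mem_of_mem_subwordAt_of_isReduced {ω : List B} {S : Finset (Fin ω.length)}
    (hS : cs.IsReduced (subwordAt ω S))
    (hw : cs.wordProd (subwordAt ω S) ∈ Subgroup.closure (cs.simple '' J)) :
    ∀ k ∈ S, ω.get k ∈ J :=
  fun k hk => cs.mem_of_mem_of_isReduced hS hw _ (mem_subwordAt.mpr ⟨k, hk, rfl⟩)

end Parabolic

theorem isReduced_iff_of_wordProd_eq_mul {ω ω₁ ω₂ : List B}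
    (hprod : cs.wordProd ω = cs.wordProd ω₁ * cs.wordProd ω₂)
    (hlen : ω.length = ω₁.length + ω₂.length) :
    cs.IsReduced ω ↔ cs.IsReduced ω₁ ∧ cs.IsReduced ω₂ ∧
      cs.length (cs.wordProd ω₁ * cs.wordProd ω₂) =
        cs.length (cs.wordProd ω₁) + cs.length (cs.wordProd ω₂) := by
  have h₁ := cs.length_wordProd_le ω₁
  have h₂ := cs.length_wordProd_le ω₂
  have h := cs.length_mul_le (cs.wordProd ω₁) (cs.wordProd ω₂)
  unfold IsReduced
  rw [hprod, hlen]
  omega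

theorem wordProd_subwordAt_union (ω : List B) {S T : Finset (Fin ω.length)} (hST : Disjoint S T)
    (hcomm : ∀ k ∈ S, ∀ l ∈ T, Commute (cs.simple (ω.get k)) (cs.simple (ω.get l))) :
    cs.wordProd (subwordAt ω (S ∪ T)) =
      cs.wordProd (subwordAt ω S) * cs.wordProd (subwordAt ω T) := by
  classical
  have hS : (S ∪ T).filter (· ∈ S) = S := by ext; simp +contextual
  have hT : (S ∪ T).filter (· ∉ S) = T := by
    ext k
    have := @Finset.disjoint_left.mp hST k
    simp only [Finset.mem_filter, Finset.mem_union]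
    tauto
  simp only [subwordAt, wordProd, List.map_map]
  rw [List.prod_map_eq_prod_map_filter_mul_prod_map_filter_not _ (· ∈ S)]
  · rw [← Finset.sort_filter, ← Finset.sort_filter, hS, hT]
  · intro k _ l hl hkS hlS
    rw [Finset.mem_sort, Finset.mem_union] at hl
    exact hcomm k hkS l (hl.resolve_left hlS)

end CoxeterSystem

theorem subword_reduced_word_for_commuting_product_general
    {B W : Type*} [Group W] {M : CoxeterMatrix B} (cs : CoxeterSystem M W)
    (J K : Set B) (hdisj : Disjoint J K)
    (hcomm : ∀ j ∈ J, ∀ k ∈ K, Commute (cs.simple j) (cs.simple k))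
    (ω : List B)
    (vJ vK : W)
    (hvJ : vJ ∈ Subgroup.closure (cs.simple '' J))
    (hvK : vK ∈ Subgroup.closure (cs.simple '' K))
    (hlen : cs.length (vJ * vK) = cs.length vJ + cs.length vK) :
    ∀ S : Finset (Fin ω.length),
      (cs.IsReduced (subwordAt ω S) ∧ cs.wordProd (subwordAt ω S) = vJ * vK) ↔
      ∃ SJ SK : Finset (Fin ω.length), S = SJ ∪ SK ∧
        cs.IsReduced (subwordAt ω SJ) ∧ cs.wordProd (subwordAt ω SJ) = vJ ∧
        cs.IsReduced (subwordAt ω SK) ∧ cs.wordProd (subwordAt ω SK) = vK := by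
  classical
  intro S
  constructor
  · rintro ⟨hS, hprod⟩
    have hJK : vJ * vK ∈ Subgroup.closure (cs.simple '' (J ∪ K)) := by
      rw [Set.image_union, Subgroup.closure_union]
      exact Subgroup.mul_mem_sup hvJ hvK
    have hletters := cs.mem_of_mem_subwordAt_of_isReduced hS (hprod ▸ hJK)
    set SJ := S.filter (ω.get · ∈ J)
    set SK := S.filter (ω.get · ∉ J)
    have hSJ : ∀ k ∈ SJ, ω.get k ∈ J := fun k hk => (Finset.mem_filter.mp hk).2
    have hSK : ∀ k ∈ SK, ω.get k ∈ K := fun k hk =>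
      (hletters k (Finset.mem_filter.mp hk).1).resolve_left (Finset.mem_filter.mp hk).2
    have hST : Disjoint SJ SK := Finset.disjoint_filter_filter_not _ _ _
    have hunion : SJ ∪ SK = S := Finset.filter_union_filter_not_eq _ _
    have hsplit := cs.wordProd_subwordAt_union ω hST fun k hk l hl =>
      hcomm _ (hSJ k hk) _ (hSK l hl)
    rw [hunion] at hsplit
    obtain ⟨hredJ, hredK, -⟩ := (cs.isReduced_iff_of_wordProd_eq_mul hsplit
      (by simp [length_subwordAt, ← hunion, Finset.card_union_of_disjoint hST])).mp hS
    obtain ⟨hJ, hK⟩ := cs.eq_and_eq_of_mul_eq_mul hdisj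
      (cs.wordProd_mem_closure (by simpa [mem_subwordAt] using hSJ)) hvJ
      (cs.wordProd_mem_closure (by simpa [mem_subwordAt] using hSK)) hvK (hsplit ▸ hprod)
    exact ⟨SJ, SK, hunion.symm, hredJ, hJ, hredK, hK⟩
  · rintro ⟨SJ, SK, rfl, hredJ, hJ, hredK, hK⟩
    have hSJ := cs.mem_of_mem_subwordAt_of_isReduced hredJ (hJ ▸ hvJ)
    have hSK := cs.mem_of_mem_subwordAt_of_isReduced hredK (hK ▸ hvK)
    have hST : Disjoint SJ SK := Finset.disjoint_left.mpr fun k hkJ hkK =>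
      hdisj.notMem_of_mem_left (hSJ k hkJ) (hSK k hkK)
    have hsplit := cs.wordProd_subwordAt_union ω hST fun k hk l hl =>
      hcomm _ (hSJ k hk) _ (hSK l hl)
    refine ⟨(cs.isReduced_iff_of_wordProd_eq_mul hsplit ?_).mpr ⟨hredJ, hredK, ?_⟩, ?_⟩
    · simp [length_subwordAt, Finset.card_union_of_disjoint hST]
    · rw [hJ, hK, hlen]
    · rw [hsplit, hJ, hK]

/-- Let `W` be a Coxeter group, and let `J` and `K` be disjoint sets of simple-reflection
indices such that every simple reflection of `J` commutes with every simple reflection of `K`.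
Fix a reduced word `ω` and elements `v_J ∈ W_J`, `v_K ∈ W_K` (so that
`ℓ(v_J v_K) = ℓ(v_J) + ℓ(v_K)`).  Then a subword of `ω` is a reduced word for `v_J · v_K`
if and only if its index set is the union of the index sets of subwords of `ω` that are
reduced words for `v_J` and `v_K` respectively. -/
theorem subword_reduced_word_for_commuting_product
    {B W : Type*} [DecidableEq B] [Group W] {M : CoxeterMatrix B} (cs : CoxeterSystem M W)
    (J K : Set B) (hdisj : Disjoint J K)
    (hcomm : ∀ j ∈ J, ∀ k ∈ K, Commute (cs.simple j) (cs.simple k))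
    (ω : List B) (hred : cs.IsReduced ω)
    (vJ vK : W)
    (hvJ : vJ ∈ Subgroup.closure (cs.simple '' J))
    (hvK : vK ∈ Subgroup.closure (cs.simple '' K))
    (hlen : cs.length (vJ * vK) = cs.length vJ + cs.length vK) :
    ∀ S : Finset (Fin ω.length),
      (cs.IsReduced (subwordAt ω S) ∧ cs.wordProd (subwordAt ω S) = vJ * vK) ↔
      ∃ SJ SK : Finset (Fin ω.length), S = SJ ∪ SK ∧
        cs.IsReduced (subwordAt ω SJ) ∧ cs.wordProd (subwordAt ω SJ) = vJ ∧
        cs.IsReduced (subwordAt ω SK) ∧ cs.wordProd (subwordAt ω SK) = vK :=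
  subword_reduced_word_for_commuting_product_general cs J K hdisj hcomm ω vJ vK hvJ hvK hlen
end

section
/- For every integer n ≥ 2, the quantity ((n(n+1)/2) · ∑_{i=0}^{n−1} (n+i)!/(n·i!)) / ((2n−1)!/(n−1)!) equals n. -/
/-!
The sum telescopes: `(k + 1) · ∑_{i ≤ m} (k + i)! / i! = (k + m + 1)! / m!`, because adding
the next term `(k + 1) · (k + m + 1)! / (m + 1)!` to `(k + m + 1)! / m!` gives
`(k + m + 2)! / (m + 1)!`. Taking `k = n` and `m = n - 1`, the numerator becomes
`(2n)! / (2 · (n - 1)!)`, and dividing by `(2n - 1)! / (n - 1)!` leaves `(2n)! / (2 · (2n - 1)!) = n`.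
-/

open Finset Nat

theorem succ_mul_sum_range_factorial_add_div_factorial {K : Type*} [Field K] [CharZero K]
    (k m : ℕ) :
    (k + 1 : K) * ∑ i ∈ range (m + 1), ((k + i)! : K) / i ! = (k + m + 1)! / m ! := by
  induction m with
  | zero => simp [factorial_succ]
  | succ m ih =>
    rw [sum_range_succ, mul_add, ih, show k + (m + 1) + 1 = k + m + 1 + 1 by omega,
      factorial_succ (k + m + 1), factorial_succ m, show k + (m + 1) = k + m + 1 by omega]
    push_cast
    field_simp
    ring

theorem typeB_monk_constant_general (n : ℕ) :
    (((n : ℚ) * ((n : ℚ) + 1) / 2) *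
        ∑ i ∈ Finset.range n, (Nat.factorial (n + i) : ℚ) / ((n : ℚ) * (Nat.factorial i : ℚ)))
      / ((Nat.factorial (2 * n - 1) : ℚ) / (Nat.factorial (n - 1) : ℚ)) = (n : ℚ) := by
  obtain _ | m := n
  · simp
  have hsum := succ_mul_sum_range_factorial_add_div_factorial (K := ℚ) (m + 1) m
  rw [show m + 1 + m + 1 = 2 * m + 1 + 1 by omega, factorial_succ (2 * m + 1)] at hsum
  rw [show 2 * (m + 1) - 1 = 2 * m + 1 by omega, Nat.add_sub_cancel]
  simp_rw [mul_comm ((m + 1 : ℕ) : ℚ), ← div_div, ← sum_div]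
  push_cast at hsum ⊢
  field_simp
  rw [hsum]
  field_simp
  ring

/-- For every integer `n ≥ 2`, the type `Bₙ` Monk structure constant
`((n(n+1)/2) · ∑_{i=0}^{n−1} (n+i)!/(n·i!)) / ((2n−1)!/(n−1)!)` equals `n`. -/
theorem typeB_monk_constant (n : ℕ) (hn : 2 ≤ n) :
    (((n : ℚ) * ((n : ℚ) + 1) / 2) *
        ∑ i ∈ Finset.range n, (Nat.factorial (n + i) : ℚ) / ((n : ℚ) * (Nat.factorial i : ℚ)))
      / ((Nat.factorial (2 * n - 1) : ℚ) / (Nat.factorial (n - 1) : ℚ)) = (n : ℚ) :=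
  typeB_monk_constant_general n
end
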